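/- arXiv:2006.09490 — 3 statements merged into one kernel-verified Lean document; each statement's English description precedes it below -/
import Mathlib

section
/- Let n be a positive integer and let G, G* ⊆ ℝⁿ be sets with G* ⊆ G and with the complement G \ G* finite of cardinality ℓ. Let F : ℕ → Set(ℝⁿ) and u : ℕ → ℝⁿ be sequences such that for every index l: (i) F(l) ⊆ G; (ii) G* ⊆ F(l); (iii) if F(l) is nonempty then u(l) ∈ F(l); and (iv) if F(l) is nonempty and u(l) ∉ G*, then F(l+1) ⊆ F(l) \ {u(l)}. Then there exists an index l ≤ ℓ such that either F(l) = ∅ or u(l) ∈ G*. (This is the termination theorem for the NE-finding algorithm: G is the KKT feasible set, G* the set of Nash equilibria, F(l) the feasible set of the l-th loop's optimization, and u(l) its computed minimizer; the algorithm terminates, returning a Nash equilibrium or detecting infeasibility, within at most ℓ = |G \ G*| loops.) -/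
/-! While no loop stops, each loop removes its minimizer `u l` from the set `F l \ Gstar` of
feasible non-equilibria, so these sets form a strictly decreasing chain inside the `ℓ`-element
set `G \ Gstar`; a chain of length `ℓ + 1` would have to end in the empty set, which cannot
contain `u ℓ`. -/

lemma Set.ncard_add_le_of_ssubset_succ {α : Type*} {S : ℕ → Set α} {T : Set α}
    (hT : T.Finite) (hST : ∀ l, S l ⊆ T) {k : ℕ} (hS : ∀ l < k, S (l + 1) ⊂ S l) :
    (S k).ncard + k ≤ T.ncard := by
  induction k with
  | zero => simpa using Set.ncard_le_ncard (hST 0) hT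
  | succ k ih =>
    have hlt : (S (k + 1)).ncard < (S k).ncard :=
      Set.ncard_lt_ncard (hS k k.lt_succ_self) (hT.subset (hST k))
    have := ih fun l hl => hS l (hl.trans k.lt_succ_self)
    omega

theorem stmt_0_general (n : ℕ) (G Gstar : Set (Fin n → ℝ))
    (hfin : (G \ Gstar).Finite)
    (F : ℕ → Set (Fin n → ℝ)) (u : ℕ → (Fin n → ℝ))
    (hFG : ∀ l, F l ⊆ G)
    (huF : ∀ l, (F l).Nonempty → u l ∈ F l)
    (hdec : ∀ l, (F l).Nonempty → u l ∉ Gstar → F (l + 1) ⊆ (F l) \ {u l}) :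
    ∃ l ≤ (G \ Gstar).ncard, F l = ∅ ∨ u l ∈ Gstar := by
  by_contra! hrun
  have hmem : ∀ l ≤ (G \ Gstar).ncard, u l ∈ F l \ Gstar := fun l hl =>
    ⟨huF l (hrun l hl).1, (hrun l hl).2⟩
  have hstep : ∀ l < (G \ Gstar).ncard, F (l + 1) \ Gstar ⊂ F l \ Gstar := by
    intro l hl
    have hsub := hdec l (hrun l hl.le).1 (hrun l hl.le).2
    have hle : F (l + 1) \ Gstar ⊆ F l \ Gstar :=
      Set.sdiff_subset_sdiff_left (hsub.trans Set.sdiff_subset)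
    exact (Set.ssubset_iff_of_subset hle).mpr ⟨u l, hmem l hl.le, fun h => (hsub h.1).2 rfl⟩
  have hFG_diff : ∀ l, F l \ Gstar ⊆ G \ Gstar := fun l => Set.sdiff_subset_sdiff_left (hFG l)
  have hcard := Set.ncard_add_le_of_ssubset_succ hfin hFG_diff hstep
  have hempty : F (G \ Gstar).ncard \ Gstar = ∅ :=
    (Set.ncard_eq_zero (hfin.subset (hFG_diff _))).mp (by omega)
  exact hempty.subset (hmem _ le_rfl)

theorem stmt_0 (n : ℕ) (hn : 0 < n) (G Gstar : Set (Fin n → ℝ))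
    (hsub : Gstar ⊆ G) (hfin : (G \ Gstar).Finite)
    (F : ℕ → Set (Fin n → ℝ)) (u : ℕ → (Fin n → ℝ))
    (hFG : ∀ l, F l ⊆ G)
    (hGstarF : ∀ l, Gstar ⊆ F l)
    (huF : ∀ l, (F l).Nonempty → u l ∈ F l)
    (hdec : ∀ l, (F l).Nonempty → u l ∉ Gstar → F (l + 1) ⊆ (F l) \ {u l}) :
    ∃ l ≤ (G \ Gstar).ncard, F l = ∅ ∨ u l ∈ Gstar :=
  stmt_0_general n G Gstar hfin F u hFG huF hdec
end

section
/- Consider the two-player game on ℝ² × ℝ² with objectives f₁(x₁, x₂) = x_{1,1}(x_{1,1} + x_{2,1} + 4x_{2,2}) + 2x_{1,2}² and f₂(x₁, x₂) = x_{2,1}(x_{1,1} + 2x_{1,2} + x_{2,1}) + x_{2,2}(2x_{1,1} + x_{1,2} + x_{2,2}), and feasible sets X₁ = X₂ = { v ∈ ℝ² : 1 − v₁² − v₂² ≥ 0 } (the closed unit disk). Then each of the following three points is a Nash equilibrium: (a) x₁* = (0,0), x₂* = (0,0); (b) x₁* = (1,0), x₂* = (−1/√5, −2/√5); (c) x₁*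 = (−1,0), x₂* = (1/√5, 2/√5). -/
/-- First player's objective in Example 1.1. -/
def f₁ (a b : ℝ × ℝ) : ℝ := a.1 * (a.1 + b.1 + 4 * b.2) + 2 * a.2 ^ 2

/-- Second player's objective in Example 1.1. -/
def f₂ (a b : ℝ × ℝ) : ℝ :=
  b.1 * (a.1 + 2 * a.2 + b.1) + b.2 * (2 * a.1 + a.2 + b.2)

/-- The common feasible set: the closed unit disk. -/
def X : Set (ℝ × ℝ) := {v | 0 ≤ 1 - v.1 ^ 2 - v.2 ^ 2}

/-- Nash equilibrium of the two-player game of Example 1.1. -/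
def isNE (a b : ℝ × ℝ) : Prop :=
  a ∈ X ∧ b ∈ X ∧ (∀ x₁ ∈ X, f₁ a b ≤ f₁ x₁ b) ∧ (∀ x₂ ∈ X, f₂ a b ≤ f₂ a x₂)

/-!
Both objectives are quadratic forms and the disk is symmetric, so the negative of an equilibrium
is an equilibrium, and (c) follows from (b). Against a fixed opponent, player 1 minimizes
`x₁² + c x₁ + 2 x₂²` with `c = b₁ + 4 b₂`, and player 2 minimizes `‖y‖² + ⟪v, y⟫` with
`v = (a₁ + 2 a₂, 2 a₁ + a₂)`. When `c ≤ -2`, resp. `‖v‖ ≥ 2`, the unconstrained minimizer lies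
outside the disk, and the constrained one is `(1, 0)`, resp. `-v / ‖v‖`.
-/

lemma mem_X_iff {v : ℝ × ℝ} : v ∈ X ↔ v.1 ^ 2 + v.2 ^ 2 ≤ 1 := by
  simp only [X, Set.mem_ofPred_eq]
  constructor <;> intro h <;> linarith

lemma neg_mem_X {v : ℝ × ℝ} (hv : v ∈ X) : -v ∈ X := by
  simpa [mem_X_iff] using hv

lemma f₁_neg (a b : ℝ × ℝ) : f₁ (-a) (-b) = f₁ a b := by
  simp only [f₁, Prod.fst_neg, Prod.snd_neg]
  ring

lemma f₂_neg (a b : ℝ × ℝ) : f₂ (-a) (-b) = f₂ a b := by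
  simp only [f₂, Prod.fst_neg, Prod.snd_neg]
  ring

theorem isNE.neg {a b : ℝ × ℝ} (h : isNE a b) : isNE (-a) (-b) := by
  obtain ⟨ha, hb, h₁, h₂⟩ := h
  refine ⟨neg_mem_X ha, neg_mem_X hb, fun x hx => ?_, fun y hy => ?_⟩
  · rw [f₁_neg, ← f₁_neg x, neg_neg]
    exact h₁ _ (neg_mem_X hx)
  · rw [f₂_neg, ← f₂_neg _ y, neg_neg]
    exact h₂ _ (neg_mem_X hy)

lemma f₁_eq (x b : ℝ × ℝ) : f₁ x b = x.1 ^ 2 + (b.1 + 4 * b.2) * x.1 + 2 * x.2 ^ 2 := by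
  unfold f₁
  ring

lemma f₂_eq (a y : ℝ × ℝ) :
    f₂ a y = y.1 ^ 2 + y.2 ^ 2 + ((a.1 + 2 * a.2) * y.1 + (2 * a.1 + a.2) * y.2) := by
  unfold f₂
  ring

lemma one_add_le_sq_add_mul {c t : ℝ} (hc : c ≤ -2) (ht : t ≤ 1) : 1 + c ≤ t ^ 2 + c * t := by
  nlinarith [mul_nonneg (sub_nonneg.2 ht) (by linarith : 0 ≤ -1 - c - t)]

lemma f₁_one_zero_le {b : ℝ × ℝ} (hb : b.1 + 4 * b.2 ≤ -2) {x : ℝ × ℝ} (hx : x ∈ X) :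
    f₁ (1, 0) b ≤ f₁ x b := by
  rw [mem_X_iff] at hx
  have hx₁ : x.1 ≤ 1 := by nlinarith [sq_nonneg x.2]
  calc f₁ (1, 0) b = 1 + (b.1 + 4 * b.2) := by rw [f₁_eq]; ring
    _ ≤ x.1 ^ 2 + (b.1 + 4 * b.2) * x.1 := one_add_le_sq_add_mul hb hx₁
    _ ≤ f₁ x b := by rw [f₁_eq]; nlinarith [sq_nonneg x.2]

/-- With `n = ‖y‖²`, Cauchy–Schwarz gives `⟪v, y⟫² ≤ r² n`, and
`(r + n - 1)² - r² n = (1 - n) ((r - 1)² - n) ≥ 0` on the disk. -/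
lemma one_sub_le_normSq_add_inner {p q r : ℝ} (hr : r ^ 2 = p ^ 2 + q ^ 2) (hr₂ : 2 ≤ r)
    {y : ℝ × ℝ} (hy : y ∈ X) : 1 - r ≤ y.1 ^ 2 + y.2 ^ 2 + (p * y.1 + q * y.2) := by
  rw [mem_X_iff] at hy
  set n := y.1 ^ 2 + y.2 ^ 2
  have cauchy_schwarz : (p * y.1 + q * y.2) ^ 2 ≤ r ^ 2 * n := by
    rw [hr]
    nlinarith [sq_nonneg (p * y.2 - q * y.1)]
  have key : r ^ 2 * n ≤ (r + n - 1) ^ 2 := by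
    nlinarith [mul_nonneg (sub_nonneg.2 hy) (by nlinarith : 0 ≤ (r - 1) ^ 2 - n)]
  nlinarith [sq_nonneg y.1, sq_nonneg y.2]

lemma neg_div_mem_X {p q r : ℝ} (hr : r ^ 2 = p ^ 2 + q ^ 2) (hr₀ : r ≠ 0) :
    (-p / r, -q / r) ∈ X := by
  rw [mem_X_iff, div_pow, div_pow, neg_sq, neg_sq, ← add_div, ← hr, div_self (pow_ne_zero 2 hr₀)]

lemma f₂_neg_div_le {a : ℝ × ℝ} {p q r : ℝ} (hp : a.1 + 2 * a.2 = p) (hq : 2 * a.1 + a.2 = q)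
    (hr : r ^ 2 = p ^ 2 + q ^ 2) (hr₂ : 2 ≤ r) {y : ℝ × ℝ} (hy : y ∈ X) :
    f₂ a (-p / r, -q / r) ≤ f₂ a y := by
  have hr₀ : r ≠ 0 := by positivity
  have value : f₂ a (-p / r, -q / r) = 1 - r := by
    rw [f₂_eq, hp, hq]
    field_simp
    linear_combination (-1 + r) * hr
  rw [value, f₂_eq, hp, hq]
  exact one_sub_le_normSq_add_inner hr hr₂ hy

lemma isNE_zero : isNE (0, 0) (0, 0) := by
  refine ⟨by simp [mem_X_iff], by simp [mem_X_iff], fun x _ => ?_, fun y _ => ?_⟩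
  · simp only [f₁_eq]
    norm_num
    positivity
  · simp only [f₂_eq]
    norm_num
    positivity

lemma isNE_one_zero : isNE (1, 0) (-1 / Real.sqrt 5, -2 / Real.sqrt 5) := by
  have hs : Real.sqrt 5 ^ 2 = 1 ^ 2 + 2 ^ 2 := by norm_num
  have hs₀ : 0 < Real.sqrt 5 := by positivity
  have hs₂ : 2 ≤ Real.sqrt 5 := by nlinarith
  refine ⟨by simp [mem_X_iff], neg_div_mem_X hs hs₀.ne', fun x hx => ?_, fun y hy => ?_⟩
  · refine f₁_one_zero_le ?_ hx
    rw [show (-1 / Real.sqrt 5 + 4 * (-2 / Real.sqrt 5)) = -9 / Real.sqrt 5 by ring,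
      div_le_iff₀ hs₀]
    nlinarith
  · exact f₂_neg_div_le (by norm_num) (by norm_num) hs hs₂ hy

theorem stmt_9 :
    isNE (0, 0) (0, 0) ∧
    isNE (1, 0) (-1 / Real.sqrt 5, -2 / Real.sqrt 5) ∧
    isNE (-1, 0) (1 / Real.sqrt 5, 2 / Real.sqrt 5) := by
  refine ⟨isNE_zero, isNE_one_zero, ?_⟩
  simpa [neg_div] using isNE_one_zero.neg
end

section
/- Consider the system of polynomial equations and inequalities in the variables (x_{1,1}, x_{1,2}, x_{2,1}, x_{2,2}, λ₁, λ₂) ∈ ℝ⁶: 2x_{1,1} + x_{2,1} + 4x_{2,2} = −2λ₁ x_{1,1}; 4x_{1,2} = −2λ₁ x_{1,2}; x_{1,1} + 2x_{1,2} + 2x_{2,1} = −2λ₂ x_{2,1}; 2x_{1,1} + x_{1,2} + 2x_{2,2} = −2λ₂ x_{2,2}; λ₁(1 − x_{1,1}² − x_{1,2}²) = 0; λ₂(1 − x_{2,1}² − x_{2,2}²) = 0; 1 − x_{1,1}² − x_{1,2}² ≥ 0; 1 − x_{2,1}² − x_{2,2}² ≥ 0; λ₁ ≥ 0; λ₂ ≥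 0. The set of solutions of this system is exactly the three tuples: (i) x₁ = (0,0), x₂ = (0,0), λ₁ = λ₂ = 0; (ii) x₁ = (1,0), x₂ = (−1/√5, −2/√5), λ₁ = 9√5/10 − 1, λ₂ = √5/2 − 1; (iii) x₁ = (−1,0), x₂ = (1/√5, 2/√5), λ₁ = 9√5/10 − 1, λ₂ = √5/2 − 1. -/
/-!
Since the multipliers are nonnegative, the coefficients `4 + 2λ₁` and `2 + 2λ₂` in the
stationarity equations cannot vanish, which forces `x₁₂ = 0` and `x₂₂ = 2 x₂₁`. What remains is `a x₁₁ = -9 x₂₁`, `b x₂₁ = -x₁₁` with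
`a = 2 + 2λ₁`, `b = 2 + 2λ₂`, so either `x₂₁ = 0` (and everything vanishes) or `ab = 9`.
In the latter case neither multiplier can be zero (the other one would then violate its
ball constraint), so both constraints are active: `x₁₁² = 1` and `5 x₂₁² = 1`, whence
`b² = 5`, i.e. `b = √5` and `a = 9/√5`.
-/

def IsKKTPoint (x11 x12 x21 x22 l1 l2 : ℝ) : Prop :=
  2 * x11 + x21 + 4 * x22 = -2 * l1 * x11 ∧
  4 * x12 = -2 * l1 * x12 ∧
  x11 + 2 * x12 + 2 * x21 = -2 * l2 * x21 ∧
  2 * x11 + x12 + 2 * x22 = -2 * l2 * x22 ∧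
  l1 * (1 - x11 ^ 2 - x12 ^ 2) = 0 ∧
  l2 * (1 - x21 ^ 2 - x22 ^ 2) = 0 ∧
  0 ≤ 1 - x11 ^ 2 - x12 ^ 2 ∧
  0 ≤ 1 - x21 ^ 2 - x22 ^ 2 ∧
  0 ≤ l1 ∧ 0 ≤ l2

/- The system left after substituting `x₁₂ = 0` and `x₂₂ = 2 x₂₁`, with `x = x₁₁`, `y = x₂₁`. -/
def IsReducedKKTPoint (x y l1 l2 : ℝ) : Prop :=
  (2 + 2 * l1) * x = -9 * y ∧
  (2 + 2 * l2) * y = -x ∧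
  l1 * (1 - x ^ 2) = 0 ∧
  l2 * (1 - 5 * y ^ 2) = 0 ∧
  x ^ 2 ≤ 1 ∧ 5 * y ^ 2 ≤ 1 ∧
  0 ≤ l1 ∧ 0 ≤ l2

theorem eq_zero_of_pos_add_nonneg_mul_eq_zero {c l x : ℝ} (hc : 0 < c) (hl : 0 ≤ l)
    (h : (c + l) * x = 0) : x = 0 :=
  (mul_eq_zero.mp h).resolve_left (by positivity)

namespace IsKKTPoint

variable {x11 x12 x21 x22 l1 l2 : ℝ}

theorem neg (h : IsKKTPoint x11 x12 x21 x22 l1 l2) :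
    IsKKTPoint (-x11) (-x12) (-x21) (-x22) l1 l2 := by
  obtain ⟨h1, h2, h3, h4, h5, h6, h7, h8, hl1, hl2⟩ := h
  simp only [IsKKTPoint, neg_sq]
  exact ⟨by linear_combination -h1, by linear_combination -h2, by linear_combination -h3,
    by linear_combination -h4, h5, h6, h7, h8, hl1, hl2⟩

theorem reduce (h : IsKKTPoint x11 x12 x21 x22 l1 l2) :
    x12 = 0 ∧ x22 = 2 * x21 ∧ IsReducedKKTPoint x11 x21 l1 l2 := by
  obtain ⟨h1, h2, h3, h4, h5, h6, h7, h8, hl1, hl2⟩ := h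
  have hx12 : x12 = 0 :=
    eq_zero_of_pos_add_nonneg_mul_eq_zero (c := 4) (l := 2 * l1) (by norm_num) (by positivity)
      (by linear_combination h2)
  have hx22 : x22 = 2 * x21 := by
    have := eq_zero_of_pos_add_nonneg_mul_eq_zero (c := 2) (l := 2 * l2) (x := x22 - 2 * x21)
      (by norm_num) (by positivity) (by linear_combination h4 - 2 * h3 + 3 * hx12)
    linarith
  subst hx12 hx22
  refine ⟨rfl, rfl, by linear_combination h1, by linear_combination h3, by linear_combination h5,
    by linear_combination h6, by linarith, by linarith, hl1, hl2⟩

end IsKKTPoint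

namespace IsReducedKKTPoint

variable {x y l1 l2 : ℝ}

theorem eq_zero_of_right_eq_zero (h : IsReducedKKTPoint x y l1 l2) (hy : y = 0) :
    x = 0 ∧ l1 = 0 ∧ l2 = 0 := by
  obtain ⟨-, h2, h3, h4, -⟩ := h
  subst hy
  have hx : x = 0 := by linarith
  subst hx
  exact ⟨rfl, by simpa using h3, by simpa using h4⟩

theorem mul_eq_nine (h : IsReducedKKTPoint x y l1 l2) (hy : y ≠ 0) :
    (2 + 2 * l1) * (2 + 2 * l2) = 9 := by
  obtain ⟨h1, h2, -⟩ := h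
  have : y * ((2 + 2 * l1) * (2 + 2 * l2) - 9) = 0 := by
    linear_combination (2 + 2 * l1) * h2 - h1
  linarith [(mul_eq_zero.mp this).resolve_left hy]

theorem left_pos (h : IsReducedKKTPoint x y l1 l2) (hy : y ≠ 0) : 0 < l1 := by
  have h9 := h.mul_eq_nine hy
  obtain ⟨h1, -, -, h4, h5, -, hl1, -⟩ := h
  refine hl1.lt_of_ne fun hl1 => ?_
  subst hl1
  have hl2 : l2 = 5 / 4 := by linarith
  subst hl2
  have hx : x = -9 / 2 * y := by linarith
  have hx2 : 20 * x ^ 2 = 81 := by rw [hx]; linear_combination -(324 / 5) * h4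
  linarith

theorem right_pos (h : IsReducedKKTPoint x y l1 l2) (hy : y ≠ 0) : 0 < l2 := by
  have h9 := h.mul_eq_nine hy
  obtain ⟨-, h2, h3, -, -, h6, -, hl2⟩ := h
  refine hl2.lt_of_ne fun hl2 => ?_
  subst hl2
  have hl1 : l1 = 5 / 4 := by linarith
  subst hl1
  have hyx : y = -x / 2 := by linarith
  have hy2 : 20 * y ^ 2 = 5 := by rw [hyx]; linear_combination -4 * h3
  linarith

theorem eq_of_ne_zero (h : IsReducedKKTPoint x y l1 l2) (hy : y ≠ 0) :
    (x = 1 ∨ x = -1) ∧ y = -x / √5 ∧ l1 = 9 * √5 / 10 - 1 ∧ l2 = √5 / 2 - 1 := by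
  have h9 := h.mul_eq_nine hy
  have hl1 := h.left_pos hy
  have hl2 := h.right_pos hy
  obtain ⟨-, h2, h3, h4, -⟩ := h
  have hx2 : x ^ 2 = 1 := by linarith [(mul_eq_zero.mp h3).resolve_left hl1.ne']
  have hy2 : 5 * y ^ 2 = 1 := by linarith [(mul_eq_zero.mp h4).resolve_left hl2.ne']
  have hb2 : (2 + 2 * l2) ^ 2 = 5 := by
    linear_combination 5 * ((2 + 2 * l2) * y - x) * h2 - (2 + 2 * l2) ^ 2 * hy2 + 5 * hx2
  have hb : 2 + 2 * l2 = √5 := by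
    rw [← hb2, Real.sqrt_sq (by positivity)]
  have hs : √5 ^ 2 = 5 := Real.sq_sqrt (by norm_num)
  rw [hb] at h9 h2
  refine ⟨sq_eq_one_iff.mp hx2, ?_, ?_, by linarith⟩
  · field_simp
    linear_combination h2
  · linear_combination (√5 / 10) * h9 - ((2 + 2 * l1) / 10) * hs

end IsReducedKKTPoint

theorem isKKTPoint_zero : IsKKTPoint 0 0 0 0 0 0 := by
  norm_num [IsKKTPoint]

theorem isKKTPoint_boundary :
    IsKKTPoint 1 0 (-1 / √5) (-2 / √5) (9 * √5 / 10 - 1) (√5 / 2 - 1) := by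
  have hs : √5 ^ 2 = 5 := Real.sq_sqrt (by norm_num)
  have hs2 : 2 < √5 := by nlinarith [Real.sqrt_nonneg 5]
  refine ⟨?_, by ring, ?_, ?_, by ring, ?_, by norm_num, ?_, by linarith, by linarith⟩
  all_goals field_simp
  all_goals nlinarith [hs]

theorem stmt_11 (x11 x12 x21 x22 l1 l2 : ℝ) :
    (2 * x11 + x21 + 4 * x22 = -2 * l1 * x11 ∧
     4 * x12 = -2 * l1 * x12 ∧
     x11 + 2 * x12 + 2 * x21 = -2 * l2 * x21 ∧
     2 * x11 + x12 + 2 * x22 = -2 * l2 * x22 ∧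
     l1 * (1 - x11 ^ 2 - x12 ^ 2) = 0 ∧
     l2 * (1 - x21 ^ 2 - x22 ^ 2) = 0 ∧
     0 ≤ 1 - x11 ^ 2 - x12 ^ 2 ∧
     0 ≤ 1 - x21 ^ 2 - x22 ^ 2 ∧
     0 ≤ l1 ∧ 0 ≤ l2) ↔
    ((x11, x12, x21, x22, l1, l2) = (0, 0, 0, 0, 0, 0) ∨
     (x11, x12, x21, x22, l1, l2) =
       (1, 0, -1 / Real.sqrt 5, -2 / Real.sqrt 5,
        9 * Real.sqrt 5 / 10 - 1, Real.sqrt 5 / 2 - 1) ∨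
     (x11, x12, x21, x22, l1, l2) =
       (-1, 0, 1 / Real.sqrt 5, 2 / Real.sqrt 5,
        9 * Real.sqrt 5 / 10 - 1, Real.sqrt 5 / 2 - 1)) := by
  change IsKKTPoint x11 x12 x21 x22 l1 l2 ↔ _
  constructor
  · intro h
    obtain ⟨rfl, rfl, hred⟩ := h.reduce
    by_cases hy : x21 = 0
    · obtain ⟨rfl, rfl, rfl⟩ := hred.eq_zero_of_right_eq_zero hy
      subst hy
      simp
    · obtain ⟨rfl | rfl, rfl, rfl, rfl⟩ := hred.eq_of_ne_zero hy
      · right; left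
        simp only [Prod.mk.injEq, true_and, and_true]
        ring
      · right; right
        simp only [Prod.mk.injEq, true_and, and_true]
        constructor <;> ring
  · rintro (h | h | h) <;> simp only [Prod.mk.injEq] at h <;>
      obtain ⟨rfl, rfl, rfl, rfl, rfl, rfl⟩ := h
    · exact isKKTPoint_zero
    · exact isKKTPoint_boundary
    · simpa [neg_div] using isKKTPoint_boundary.neg
end
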